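/- arXiv:1406.2370 — 2 statements merged into one kernel-verified Lean document; each statement's English description precedes it below -/
import Mathlib

section
/- Abstract Simulation Theorem for distilleries: given a distillery (M, C, ≡, decode), for every machine execution ρ : s →* s' there exists a derivation d : decode(s) ⊸* t with t ≡ decode(s') such that the number of multiplicative machine transitions in ρ equals the number of ⊸ₘ steps in d, the number of exponential machine transitions in ρ equals the number of ⊸ₑ steps in d, and the number of principal transitions in ρ equals the length of d. -/
/-!
Strong bisimulation lets a derivation be transported along `E` without changing its counts.
The simulation is then built backwards along the execution: a commutative transition only
transports the derivation simulating the rest, while a principal one first transports it to the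
reduct of its decoded calculus step and then prepends that step.
-/

inductive Exec {σ : Type*} (Rc Rmm Rme : σ → σ → Prop) : ℕ → ℕ → ℕ → σ → σ → Prop
  | refl (s : σ) : Exec Rc Rmm Rme 0 0 0 s s
  | cstep {s s' s'' : σ} {c m e : ℕ} :
      Rc s s' → Exec Rc Rmm Rme c m e s' s'' → Exec Rc Rmm Rme (c + 1) m e s s''
  | mstep {s s' s'' : σ} {c m e : ℕ} :
      Rmm s s' → Exec Rc Rmm Rme c m e s' s'' → Exec Rc Rmm Rme c (m + 1) e s s''
  | estep {s s' s'' : σ} {c m e : ℕ} :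
      Rme s s' → Exec Rc Rmm Rme c m e s' s'' → Exec Rc Rmm Rme c m (e + 1) s s''

/-- The length of a derivation is the sum of its two counts, so the number of principal
    transitions equals the length of the simulating derivation. -/
inductive RedSeq {τ : Type*} (Cm Ce : τ → τ → Prop) : ℕ → ℕ → τ → τ → Prop
  | refl (t : τ) : RedSeq Cm Ce 0 0 t t
  | mstep {t t' t'' : τ} {m e : ℕ} :
      Cm t t' → RedSeq Cm Ce m e t' t'' → RedSeq Cm Ce (m + 1) e t t''
  | estep {t t' t'' : τ} {m e : ℕ} :
      Ce t t' → RedSeq Cm Ce m e t' t'' → RedSeq Cm Ce m (e + 1) t t''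

namespace RedSeq

variable {τ : Type*} {Cm Ce E : τ → τ → Prop}

theorem exists_of_bisim (hbisimM : ∀ t u t', E t u → Cm t t' → ∃ u', Cm u u' ∧ E t' u')
    (hbisimE : ∀ t u t', E t u → Ce t t' → ∃ u', Ce u u' ∧ E t' u') {m e : ℕ} {t t' u : τ}
    (h : RedSeq Cm Ce m e t t') (htu : E t u) :
    ∃ u', RedSeq Cm Ce m e u u' ∧ E t' u' := by
  induction h generalizing u with
  | refl t => exact ⟨u, .refl u, htu⟩
  | mstep hstep _ ih =>
    obtain ⟨w, hw, hE⟩ := hbisimM _ _ _ htu hstep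
    obtain ⟨u', hu', hE'⟩ := ih hE
    exact ⟨u', .mstep hw hu', hE'⟩
  | estep hstep _ ih =>
    obtain ⟨w, hw, hE⟩ := hbisimE _ _ _ htu hstep
    obtain ⟨u', hu', hE'⟩ := ih hE
    exact ⟨u', .estep hw hu', hE'⟩

theorem exists_equiv_of_equiv (hbisimM : ∀ t u t', E t u → Cm t t' → ∃ u', Cm u u' ∧ E t' u')
    (hbisimE : ∀ t u t', E t u → Ce t t' → ∃ u', Ce u u' ∧ E t' u') (hequiv : Equivalence E)
    {m e : ℕ} {t t' v : τ} (htt' : E t t')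
    (h : ∃ u, RedSeq Cm Ce m e t' u ∧ E u v) : ∃ u, RedSeq Cm Ce m e t u ∧ E u v := by
  obtain ⟨u, hu, huv⟩ := h
  obtain ⟨u', hu', huu'⟩ := hu.exists_of_bisim hbisimM hbisimE (hequiv.symm htt')
  exact ⟨u', hu', hequiv.trans (hequiv.symm huu') huv⟩

end RedSeq

theorem distillery_simulation_general {σ τ : Type*}
    (Rc Rmm Rme : σ → σ → Prop)            -- machine transitions
    (Cm Ce : τ → τ → Prop)                 -- the calculus
    (E : τ → τ → Prop)                     -- structural equivalence
    (decode : σ → τ)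
    (reachable : σ → Prop)
    (hreach : ∀ s s', reachable s → (Rc s s' ∨ Rmm s s' ∨ Rme s s') → reachable s')
    (hequiv : Equivalence E)
    (hbisimM : ∀ t u t', E t u → Cm t t' → ∃ u', Cm u u' ∧ E t' u')
    (hbisimE : ∀ t u t', E t u → Ce t t' → ∃ u', Ce u u' ∧ E t' u')
    (hdecC : ∀ s s', reachable s → Rc s s' → E (decode s) (decode s'))
    (hdecM : ∀ s s', reachable s → Rmm s s' →
      ∃ w, Cm (decode s) w ∧ E w (decode s'))
    (hdecE : ∀ s s', reachable s → Rme s s' →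
      ∃ w, Ce (decode s) w ∧ E w (decode s')) :
    ∀ (c m e : ℕ) (s s' : σ), reachable s → Exec Rc Rmm Rme c m e s s' →
      ∃ t, RedSeq Cm Ce m e (decode s) t ∧ E t (decode s') := by
  have transport := @RedSeq.exists_equiv_of_equiv _ _ _ _ hbisimM hbisimE hequiv
  intro c m e s s' hr hex
  induction hex with
  | refl s => exact ⟨decode s, .refl _, hequiv.refl _⟩
  | cstep h _ ih => exact transport (hdecC _ _ hr h) (ih (hreach _ _ hr (.inl h)))
  | mstep h _ ih =>
    obtain ⟨w, hw, hwE⟩ := hdecM _ _ hr h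
    obtain ⟨u, hu, huE⟩ := transport hwE (ih (hreach _ _ hr (.inr (.inl h))))
    exact ⟨u, .mstep hw hu, huE⟩
  | estep h _ ih =>
    obtain ⟨w, hw, hwE⟩ := hdecE _ _ hr h
    obtain ⟨u, hu, huE⟩ := transport hwE (ih (hreach _ _ hr (.inr (.inr h))))
    exact ⟨u, .estep hw hu, huE⟩

/-- Abstract Simulation Theorem for distilleries.
    Hypotheses spell out the definition of a distillery:
    a deterministic machine with commutative/multiplicative/exponential
    transitions, a calculus (Cm, Ce), a structural equivalence `E` that is a
    strong bisimulation, and a decoding sending (on reachable states)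
    commutative transitions to `E`, multiplicative ones to `Cm`-step followed by
    `E`, and exponential ones to `Ce`-step followed by `E`. Every machine
    execution from a reachable state is then simulated by a derivation with the
    same number of multiplicative, exponential and principal steps. -/
theorem distillery_simulation {σ τ : Type*}
    (Rc Rmm Rme : σ → σ → Prop)            -- machine transitions
    (Cm Ce : τ → τ → Prop)                 -- the calculus
    (E : τ → τ → Prop)                     -- structural equivalence
    (decode : σ → τ)
    (reachable : σ → Prop)
    (hreach : ∀ s s', reachable s → (Rc s s' ∨ Rmm s s' ∨ Rme s s') → reachable s')
    (hdet : ∀ s s₁ s₂, (Rc s s₁ ∨ Rmm s s₁ ∨ Rme s s₁) →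
      (Rc s s₂ ∨ Rmm s s₂ ∨ Rme s s₂) → s₁ = s₂)
    (hequiv : Equivalence E)
    (hbisimM : ∀ t u t', E t u → Cm t t' → ∃ u', Cm u u' ∧ E t' u')
    (hbisimE : ∀ t u t', E t u → Ce t t' → ∃ u', Ce u u' ∧ E t' u')
    (hdecC : ∀ s s', reachable s → Rc s s' → E (decode s) (decode s'))
    (hdecM : ∀ s s', reachable s → Rmm s s' →
      ∃ w, Cm (decode s) w ∧ E w (decode s'))
    (hdecE : ∀ s s', reachable s → Rme s s' →
      ∃ w, Ce (decode s) w ∧ E w (decode s')) :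
    ∀ (c m e : ℕ) (s s' : σ), reachable s → Exec Rc Rmm Rme c m e s s' →
      ∃ t, RedSeq Cm Ce m e (decode s) t ∧ E t (decode s') :=
  distillery_simulation_general Rc Rmm Rme Cm Ce E decode reachable hreach hequiv hbisimM hbisimE
    hdecC hdecM hdecE
end

section
/- Abstract Reverse Simulation for reflective distilleries: let D be a reflective distillery and s an initial state. For every derivation d : decode(s) ⊸* t there is a machine execution ρ : s →* s' such that t ≡ decode(s'), and the numbers of multiplicative, exponential, and principal steps of ρ equal the corresponding counts of d. -/
/-!
A derivation is simulated step by step, keeping the invariant that the current term is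
structurally equivalent to the decoding of a reachable machine state. Before each principal
step the machine is first run to its commutative normal form, which preserves the invariant
since commutative transitions decode to equivalent terms. Progress then provides a machine
transition of the same kind, which decodes to a step of the decoded term; as ≡ is a strong
bisimulation and the calculus is deterministic, that step matches the derivation's step up to ≡.
-/

namespace Relation.ReflTransGen

variable {α β : Type*} {r : α → α → Prop} {a b : α}

theorem invariant {P : α → Prop} (hP : ∀ x y, P x → r x y → P y)
    (h : ReflTransGen r a b) (ha : P a) : P b := by
  induction h with
  | refl => exact ha
  | tail _ hr ih => exact hP _ _ ih hr

theorem rel_of_invariant {P : α → Prop} {p : β → β → Prop} (f : α → β) (hp : Equivalence p)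
    (hP : ∀ x y, P x → r x y → P y) (hrp : ∀ x y, P x → r x y → p (f x) (f y))
    (h : ReflTransGen r a b) (ha : P a) : p (f a) (f b) := by
  induction h with
  | refl => exact hp.refl _
  | tail hab hr ih => exact hp.trans ih (hrp _ _ (hab.invariant hP ha) hr)

end Relation.ReflTransGen

section Distillery

variable {σ τ : Type*} {Rc Rmm Rme : σ → σ → Prop} {Cm Ce : τ → τ → Prop}
  {E : τ → τ → Prop} {decode : σ → τ} {reachable : σ → Prop}

theorem Exec.exists_of_reflTransGen_of_exec {s s' s'' : σ} {c m e : ℕ}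
    (h : Relation.ReflTransGen Rc s s') (hx : Exec Rc Rmm Rme c m e s' s'') :
    ∃ c', Exec Rc Rmm Rme c' m e s s'' := by
  induction h using Relation.ReflTransGen.head_induction_on with
  | refl => exact ⟨c, hx⟩
  | head hc _ ih =>
    obtain ⟨c', hx'⟩ := ih
    exact ⟨c' + 1, .cstep hc hx'⟩

theorem exists_reflTransGen_step_equiv_decode {C : τ → τ → Prop} {R : σ → σ → Prop}
    (nfc : σ → σ) (hequiv : Equivalence E)
    (hreach : ∀ s s', reachable s → Rc s s' → reachable s')
    (hdecC : ∀ s s', reachable s → Rc s s' → E (decode s) (decode s'))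
    (hnfc : ∀ s, reachable s →
      Relation.ReflTransGen Rc s (nfc s) ∧ ∀ s', ¬ Rc (nfc s) s')
    (hbisim : ∀ t u t', E t u → C t t' → ∃ u', C u u' ∧ E t' u')
    (hdet : ∀ t u₁ u₂, C t u₁ → C t u₂ → u₁ = u₂)
    (hdec : ∀ s s', reachable s → R s s' → ∃ w, C (decode s) w ∧ E w (decode s'))
    (hprog : ∀ s t, reachable s → (∀ s', ¬ Rc s s') → C (decode s) t → ∃ s', R s s')
    {s : σ} {t t' : τ} (hs : reachable s) (hE : E t (decode s)) (hC : C t t') :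
    ∃ s₀ s₁, Relation.ReflTransGen Rc s s₀ ∧ reachable s₀ ∧ R s₀ s₁ ∧
      E t' (decode s₁) := by
  obtain ⟨hc, hnf⟩ := hnfc s hs
  have hs₀ : reachable (nfc s) := hc.invariant hreach hs
  have hE₀ : E t (decode (nfc s)) :=
    hequiv.trans hE (hc.rel_of_invariant decode hequiv hreach hdecC hs)
  obtain ⟨u, hCu, hEu⟩ := hbisim _ _ _ hE₀ hC
  obtain ⟨s₁, hR⟩ := hprog _ _ hs₀ hnf hCu
  obtain ⟨w, hCw, hEw⟩ := hdec _ _ hs₀ hR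
  obtain rfl : w = u := hdet _ _ _ hCw hCu
  exact ⟨nfc s, s₁, hc, hs₀, hR, hequiv.trans hEu hEw⟩

theorem RedSeq.exists_exec_of_equiv_decode (nfc : σ → σ)
    (hreach : ∀ s s', reachable s → (Rc s s' ∨ Rmm s s' ∨ Rme s s') → reachable s')
    (hdetCalc : ∀ t u₁ u₂, (Cm t u₁ ∨ Ce t u₁) → (Cm t u₂ ∨ Ce t u₂) → u₁ = u₂)
    (hequiv : Equivalence E)
    (hbisimM : ∀ t u t', E t u → Cm t t' → ∃ u', Cm u u' ∧ E t' u')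
    (hbisimE : ∀ t u t', E t u → Ce t t' → ∃ u', Ce u u' ∧ E t' u')
    (hdecC : ∀ s s', reachable s → Rc s s' → E (decode s) (decode s'))
    (hdecM : ∀ s s', reachable s → Rmm s s' → ∃ w, Cm (decode s) w ∧ E w (decode s'))
    (hdecE : ∀ s s', reachable s → Rme s s' → ∃ w, Ce (decode s) w ∧ E w (decode s'))
    (hnfc : ∀ s, reachable s →
      Relation.ReflTransGen Rc s (nfc s) ∧ ∀ s', ¬ Rc (nfc s) s')
    (hprogM : ∀ s t, reachable s → (∀ s', ¬ Rc s s') → Cm (decode s) t → ∃ s', Rmm s s')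
    (hprogE : ∀ s t, reachable s → (∀ s', ¬ Rc s s') → Ce (decode s) t → ∃ s', Rme s s')
    {m e : ℕ} {t t' : τ} (hred : RedSeq Cm Ce m e t t') {s : σ} (hs : reachable s)
    (hE : E t (decode s)) :
    ∃ (c : ℕ) (s' : σ), Exec Rc Rmm Rme c m e s s' ∧ E t' (decode s') := by
  induction hred generalizing s with
  | refl t => exact ⟨0, s, .refl s, hE⟩
  | mstep hCm _ ih =>
    obtain ⟨s₀, s₁, hc, hs₀, hR, hE₁⟩ := exists_reflTransGen_step_equiv_decode nfc hequiv
      (fun s s' hs h => hreach s s' hs (.inl h)) hdecC hnfc hbisimM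
      (fun t _ _ h₁ h₂ => hdetCalc t _ _ (.inl h₁) (.inl h₂)) hdecM hprogM hs hE hCm
    obtain ⟨c, s', hx, hE'⟩ := ih (hreach _ _ hs₀ (.inr (.inl hR))) hE₁
    obtain ⟨c', hx'⟩ := Exec.exists_of_reflTransGen_of_exec hc (.mstep hR hx)
    exact ⟨c', s', hx', hE'⟩
  | estep hCe _ ih =>
    obtain ⟨s₀, s₁, hc, hs₀, hR, hE₁⟩ := exists_reflTransGen_step_equiv_decode nfc hequiv
      (fun s s' hs h => hreach s s' hs (.inl h)) hdecC hnfc hbisimE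
      (fun t _ _ h₁ h₂ => hdetCalc t _ _ (.inr h₁) (.inr h₂)) hdecE hprogE hs hE hCe
    obtain ⟨c, s', hx, hE'⟩ := ih (hreach _ _ hs₀ (.inr (.inr hR))) hE₁
    obtain ⟨c', hx'⟩ := Exec.exists_of_reflTransGen_of_exec hc (.estep hR hx)
    exact ⟨c', s', hx', hE'⟩

end Distillery

theorem distillery_reverse_simulation_general {σ τ : Type*}
    (Rc Rmm Rme : σ → σ → Prop)            -- machine transitions
    (Cm Ce : τ → τ → Prop)                 -- the calculus
    (E : τ → τ → Prop)                     -- structural equivalence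
    (decode : σ → τ)
    (reachable : σ → Prop)
    (nfc : σ → σ)                          -- commutative normal form
    (hreach : ∀ s s', reachable s → (Rc s s' ∨ Rmm s s' ∨ Rme s s') → reachable s')
    (hdetCalc : ∀ t u₁ u₂, (Cm t u₁ ∨ Ce t u₁) → (Cm t u₂ ∨ Ce t u₂) → u₁ = u₂)
    (hequiv : Equivalence E)
    (hbisimM : ∀ t u t', E t u → Cm t t' → ∃ u', Cm u u' ∧ E t' u')
    (hbisimE : ∀ t u t', E t u → Ce t t' → ∃ u', Ce u u' ∧ E t' u')
    (hdecC : ∀ s s', reachable s → Rc s s' → E (decode s) (decode s'))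
    (hdecM : ∀ s s', reachable s → Rmm s s' →
      ∃ w, Cm (decode s) w ∧ E w (decode s'))
    (hdecE : ∀ s s', reachable s → Rme s s' →
      ∃ w, Ce (decode s) w ∧ E w (decode s'))
    (hnfc : ∀ s, reachable s →
      Relation.ReflTransGen Rc s (nfc s) ∧ ∀ s', ¬ Rc (nfc s) s')
    (hprogM : ∀ s t, reachable s → (∀ s', ¬ Rc s s') → Cm (decode s) t →
      ∃ s', Rmm s s')
    (hprogE : ∀ s t, reachable s → (∀ s', ¬ Rc s s') → Ce (decode s) t →
      ∃ s', Rme s s') :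
    ∀ (s : σ) (m e : ℕ) (t : τ), reachable s →   -- `s` an initial state
      RedSeq Cm Ce m e (decode s) t →
      ∃ (c : ℕ) (s' : σ), Exec Rc Rmm Rme c m e s s' ∧ E t (decode s') := by
  intro s m e t hs hred
  exact hred.exists_exec_of_equiv_decode nfc hreach hdetCalc hequiv hbisimM hbisimE hdecC hdecM
    hdecE hnfc hprogM hprogE hs (hequiv.refl _)

/-- Abstract Reverse Simulation for reflective distilleries: every derivation
    from the decoding of an initial state `s` is simulated by a machine
    execution from `s`, with the same numbers of multiplicative, exponential
    (hence principal) steps. -/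
theorem distillery_reverse_simulation {σ τ : Type*}
    (Rc Rmm Rme : σ → σ → Prop)            -- machine transitions
    (Cm Ce : τ → τ → Prop)                 -- the calculus
    (E : τ → τ → Prop)                     -- structural equivalence
    (decode : σ → τ)
    (reachable : σ → Prop)
    (nfc : σ → σ)                          -- commutative normal form
    (hreach : ∀ s s', reachable s → (Rc s s' ∨ Rmm s s' ∨ Rme s s') → reachable s')
    (hdetMach : ∀ s s₁ s₂, (Rc s s₁ ∨ Rmm s s₁ ∨ Rme s s₁) →
      (Rc s s₂ ∨ Rmm s s₂ ∨ Rme s s₂) → s₁ = s₂)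
    (hdetCalc : ∀ t u₁ u₂, (Cm t u₁ ∨ Ce t u₁) → (Cm t u₂ ∨ Ce t u₂) → u₁ = u₂)
    (hdetLabel : ∀ t u₁ u₂, Cm t u₁ → Ce t u₂ → False)
    (hequiv : Equivalence E)
    (hbisimM : ∀ t u t', E t u → Cm t t' → ∃ u', Cm u u' ∧ E t' u')
    (hbisimE : ∀ t u t', E t u → Ce t t' → ∃ u', Ce u u' ∧ E t' u')
    (hdecC : ∀ s s', reachable s → Rc s s' → E (decode s) (decode s'))
    (hdecM : ∀ s s', reachable s → Rmm s s' →
      ∃ w, Cm (decode s) w ∧ E w (decode s'))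
    (hdecE : ∀ s s', reachable s → Rme s s' →
      ∃ w, Ce (decode s) w ∧ E w (decode s'))
    (hnfc : ∀ s, reachable s →
      Relation.ReflTransGen Rc s (nfc s) ∧ ∀ s', ¬ Rc (nfc s) s')
    (hprogM : ∀ s t, reachable s → (∀ s', ¬ Rc s s') → Cm (decode s) t →
      ∃ s', Rmm s s')
    (hprogE : ∀ s t, reachable s → (∀ s', ¬ Rc s s') → Ce (decode s) t →
      ∃ s', Rme s s') :
    ∀ (s : σ) (m e : ℕ) (t : τ), reachable s →   -- `s` an initial state
      RedSeq Cm Ce m e (decode s) t →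
      ∃ (c : ℕ) (s' : σ), Exec Rc Rmm Rme c m e s s' ∧ E t (decode s') :=
  distillery_reverse_simulation_general Rc Rmm Rme Cm Ce E decode reachable nfc hreach hdetCalc
    hequiv hbisimM hbisimE hdecC hdecM hdecE hnfc hprogM hprogE
end
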